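/- Let κ > 0, k ∈ ℝ² with |k| = κ, and let θ be a unit vector with θ ≠ k/κ. Let ψ₁, ψ̃₁ : (0,∞) → ℂ and f, f̃ : ℕ → ℂ be such that for every N ∈ ℕ: ψ₁(s) − √(2/(πκ s)) e^{i(κs − π/4)} Σ_{j=0}^{N} f_j s^{−j} = O(s^{−N − 3/2}) and ψ̃₁(s) − √(2/(πκ s)) e^{i(κs − π/4)} Σ_{j=0}^{N} f̃_j s^{−j} = O(s^{−N − 3/2}) as s → ∞. If |e^{i s (k·θ)} + ψ₁(s)|² = |e^{i s (k·θ)} + ψ̃₁(s)|² for all s > 0, then f_j = f̃_j for every j ∈ ℕ. -/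

import Mathlib

open Complex Filter Asymptotics RealInnerProductSpace

noncomputable section

/-- The plane ℝ². -/
abbrev E2 := EuclideanSpace ℝ (Fin 2)

/-- The truncated far-field expansion
`√(2/(πκs)) e^{i(κs − π/4)} Σ_{j=0}^{N} f_j s^{−j}`. -/
def partialFar (κ : ℝ) (f : ℕ → ℂ) (N : ℕ) (s : ℝ) : ℂ :=
  (Real.sqrt (2 / (Real.pi * κ * s)) : ℂ) *
    Complex.exp (Complex.I * ((κ * s - Real.pi / 4 : ℝ) : ℂ)) *
    ∑ j ∈ Finset.range (N + 1), f j / (s : ℂ) ^ j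

open Topology ComplexConjugate
open scoped Real

/-!
Put `a = ⟪k, θ⟫`, `e(s) = e^{isa}` and `Δ = ψ₁ − ψ̃₁`. Equal intensities give
`2 Re(ē Δ) = |ψ̃₁|² − |ψ₁|²`, which is `O(s^{-1/2} |Δ|)`. If the coefficients agree below `N`,
then `Δ = √(2/(πκs)) e^{i(κs − π/4)} (f_N − f̃_N) s^{-N} + O(s^{-N-3/2})`, and comparing orders
gives `Re(e^{i((κ − a)s − π/4)} (f_N − f̃_N)) = O(s^{-1/2})`. Since `θ ≠ k/κ`, Cauchy–Schwarz is
strict, so `κ − a > 0` and the left side is a periodic function of `s` tending to `0`; it therefore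
vanishes identically, which forces `f_N = f̃_N`. Induction on `N` concludes.
-/

lemma inner_lt_of_ne_inv_smul {F : Type*} [NormedAddCommGroup F] [InnerProductSpace ℝ F]
    {κ : ℝ} (hκ : 0 < κ) {k θ : F} (hk : ‖k‖ = κ) (hθ : ‖θ‖ = 1) (hθk : θ ≠ κ⁻¹ • k) :
    ⟪k, θ⟫ < κ := by
  have hle : ⟪k, θ⟫ ≤ κ := by simpa [hk, hθ] using real_inner_le_norm k θ
  refine hle.lt_of_ne fun heq => hθk ?_
  have h : ‖θ‖ • k = ‖k‖ • θ := inner_eq_norm_mul_iff_real.mp (by rw [hk, hθ, mul_one, heq])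
  rw [hθ, hk, one_smul] at h
  rw [h, smul_smul, inv_mul_cancel₀ hκ.ne', one_smul]

lemma Function.Periodic.eq_of_tendsto_atTop {α : Type*} [TopologicalSpace α] [T2Space α]
    {f : ℝ → α} {c : ℝ} (hf : f.Periodic c) (hc : 0 < c) {y : α}
    (h : Tendsto f atTop (𝓝 y)) (x : ℝ) : f x = y := by
  have hshift : Tendsto (fun n : ℕ => x + n * c) atTop atTop :=
    tendsto_atTop_add_const_left _ x (tendsto_natCast_atTop_atTop.atTop_mul_const hc)
  exact tendsto_nhds_unique tendsto_const_nhds ((h.comp hshift).congr fun n => hf.nat_mul n x)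

lemma eq_zero_of_forall_re_exp_mul_eq_zero {g : ℂ} (h : ∀ t : ℝ, (exp (I * t) * g).re = 0) :
    g = 0 := by
  have hre := h 0
  have him := h (π / 2)
  rw [mul_comm I, exp_mul_I, ← ofReal_cos, ← ofReal_sin, Real.cos_pi_div_two,
    Real.sin_pi_div_two] at him
  apply Complex.ext <;> simp_all

lemma eq_zero_of_tendsto_re_exp_mul {β : ℝ} (hβ : 0 < β) (φ : ℝ) {g : ℂ}
    (h : Tendsto (fun s : ℝ => (exp (I * ↑(β * s + φ)) * g).re) atTop (𝓝 0)) : g = 0 := by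
  have hper : (fun s : ℝ => (exp (I * ↑(β * s + φ)) * g).re).Periodic (2 * π / β) := by
    intro s
    have hshift : β * (s + 2 * π / β) + φ = (β * s + φ) + 2 * π := by field_simp; ring
    simp only
    rw [hshift, ofReal_add, mul_add, show I * ((2 * π : ℝ) : ℂ) = 2 * π * I by push_cast; ring,
      exp_periodic]
  refine eq_zero_of_forall_re_exp_mul_eq_zero fun t => ?_
  have := hper.eq_of_tendsto_atTop (by positivity) h ((t - φ) / β)
  rwa [show β * ((t - φ) / β) + φ = t by field_simp; ring] at this

lemma rpow_isBigO_rpow_of_le {a b : ℝ} (h : a ≤ b) :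
    (fun s : ℝ => s ^ a) =O[atTop] fun s => s ^ b := by
  refine IsBigO.of_bound 1 ?_
  filter_upwards [eventually_ge_atTop 1] with s hs
  rw [one_mul, Real.norm_of_nonneg (by positivity), Real.norm_of_nonneg (by positivity)]
  exact Real.rpow_le_rpow_of_exponent_le hs h

lemma rpow_mul_rpow_isBigO_rpow {a b c : ℝ} (h : a + b ≤ c) :
    (fun s : ℝ => s ^ a * s ^ b) =O[atTop] fun s => s ^ c :=
  (isBigO_refl _ _).mul_atTop_rpow_of_isBigO_rpow _ _ _ (isBigO_refl _ _) h

lemma const_div_pow_isBigO (c : ℂ) (N : ℕ) :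
    (fun s : ℝ => c / (s : ℂ) ^ N) =O[atTop] fun s => s ^ (-(N : ℝ)) := by
  refine IsBigO.of_bound ‖c‖ ?_
  filter_upwards [eventually_gt_atTop 0] with s hs
  rw [norm_div, norm_pow, norm_real, Real.norm_of_nonneg hs.le, Real.rpow_neg hs.le,
    Real.rpow_natCast, Real.norm_of_nonneg (by positivity), div_eq_mul_inv]

lemma sq_norm_sub_sq_norm_isBigO {α E : Type*} [SeminormedAddCommGroup E] {l : Filter α}
    {x y : α → E} {u v : α → ℝ} (hx : x =O[l] u) (hy : y =O[l] u)
    (hxy : (fun t => x t - y t) =O[l] v) :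
    (fun t => ‖x t‖ ^ 2 - ‖y t‖ ^ 2) =O[l] fun t => u t * v t := by
  have hsum : (fun t => ‖x t‖ + ‖y t‖) =O[l] u := hx.norm_left.add hy.norm_left
  have hdiff : (fun t => ‖x t‖ - ‖y t‖) =O[l] v :=
    (isBigO_of_le l fun t => by simpa using abs_norm_sub_norm_le (x t) (y t)).trans hxy
  exact (hsum.mul hdiff).congr_left fun t => (sq_sub_sq _ _).symm

lemma sq_norm_add_sub_sq_norm_add (e z w : ℂ) :
    ‖e + z‖ ^ 2 - ‖e + w‖ ^ 2 = 2 * (conj e * (z - w)).re + (‖z‖ ^ 2 - ‖w‖ ^ 2) := by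
  simp only [Complex.sq_norm, normSq_apply, add_re, add_im, mul_re, conj_re, conj_im, sub_re,
    sub_im]
  ring

lemma re_conj_mul_sub_isBigO_of_sq_norm_add_eq {α : Type*} {l : Filter α} {e ψ ψ' : α → ℂ}
    {u v : α → ℝ} (hψ : ψ =O[l] u) (hψ' : ψ' =O[l] u) (hD : (fun t => ψ t - ψ' t) =O[l] v)
    (hI : ∀ᶠ t in l, ‖e t + ψ t‖ ^ 2 = ‖e t + ψ' t‖ ^ 2) :
    (fun t => (conj (e t) * (ψ t - ψ' t)).re) =O[l] fun t => u t * v t := by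
  refine IsBigO.trans ?_ (sq_norm_sub_sq_norm_isBigO hψ hψ' hD)
  refine IsBigO.of_bound (1 / 2) ?_
  filter_upwards [hI] with t ht
  have hexpand := sq_norm_add_sub_sq_norm_add (e t) (ψ t) (ψ' t)
  rw [ht, sub_self] at hexpand
  rw [Real.norm_eq_abs, Real.norm_eq_abs,
    show (conj (e t) * (ψ t - ψ' t)).re = -(1 / 2) * (‖ψ t‖ ^ 2 - ‖ψ' t‖ ^ 2) by linarith, abs_mul]
  norm_num

def farFieldFactor (κ s : ℝ) : ℂ :=
  (√(2 / (π * κ * s)) : ℂ) * exp (I * ↑(κ * s - π / 4))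

lemma partialFar_eq (κ : ℝ) (f : ℕ → ℂ) (N : ℕ) (s : ℝ) :
    partialFar κ f N s = farFieldFactor κ s * ∑ j ∈ Finset.range (N + 1), f j / (s : ℂ) ^ j :=
  rfl

lemma farFieldFactor_eq (κ : ℝ) {s : ℝ} (hs : 0 < s) :
    farFieldFactor κ s =
      ((√(2 / (π * κ)) * s ^ (-(1 / 2 : ℝ)) : ℝ) : ℂ) * exp (I * ↑(κ * s - π / 4)) := by
  rw [farFieldFactor, show 2 / (π * κ * s) = 2 / (π * κ) / s by ring, Real.sqrt_div' _ hs.le,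
    Real.sqrt_eq_rpow s, Real.rpow_neg hs.le, div_eq_mul_inv]

lemma farFieldFactor_isBigO (κ : ℝ) :
    farFieldFactor κ =O[atTop] fun s => s ^ (-(1 / 2 : ℝ)) := by
  refine IsBigO.of_bound (√(2 / (π * κ))) ?_
  filter_upwards [eventually_gt_atTop 0] with s hs
  rw [farFieldFactor_eq κ hs, norm_mul, mul_comm I, norm_exp_ofReal_mul_I, mul_one, norm_real,
    Real.norm_of_nonneg (by positivity), Real.norm_of_nonneg (by positivity)]

lemma partialFar_sub_partialFar {f f' : ℕ → ℂ} {N : ℕ} (h : ∀ i < N, f i = f' i) (κ s : ℝ) :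
    partialFar κ f N s - partialFar κ f' N s =
      farFieldFactor κ s * ((f N - f' N) / (s : ℂ) ^ N) := by
  rw [partialFar_eq, partialFar_eq, ← mul_sub, ← Finset.sum_sub_distrib, Finset.sum_range_succ,
    Finset.sum_eq_zero fun i hi => by rw [h i (Finset.mem_range.1 hi), sub_self], zero_add,
    sub_div]

lemma isBigO_of_sub_farFieldFactor_mul_isBigO {κ : ℝ} {c : ℂ} {N : ℕ} {φ : ℝ → ℂ}
    (h : (fun s => φ s - farFieldFactor κ s * (c / (s : ℂ) ^ N)) =O[atTop]
      fun s => s ^ (-(N : ℝ) - 3 / 2)) :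
    φ =O[atTop] fun s => s ^ (-(N : ℝ) - 1 / 2) := by
  have hlead := (farFieldFactor_isBigO κ).mul_atTop_rpow_of_isBigO_rpow _ _
    (-(N : ℝ) - 1 / 2) (const_div_pow_isBigO c N) (by linarith)
  exact ((h.trans (rpow_isBigO_rpow_of_le (by linarith))).add hlead).congr_left
    fun s => sub_add_cancel _ _

lemma farFieldFactor_mul_div_pow (κ : ℝ) (g : ℂ) (N : ℕ) {s : ℝ} (hs : 0 < s) :
    farFieldFactor κ s * (g / (s : ℂ) ^ N) =
      ((s ^ (-(N : ℝ) - 1 / 2) * √(2 / (π * κ)) : ℝ) : ℂ) * (exp (I * ↑(κ * s - π / 4)) * g) := by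
  rw [farFieldFactor_eq κ hs, show -(N : ℝ) - 1 / 2 = -(1 / 2) + -(N : ℝ) by ring,
    Real.rpow_add hs, Real.rpow_neg hs.le (N : ℝ), Real.rpow_natCast]
  push_cast
  ring

lemma re_conj_exp_mul_farFieldFactor_mul (κ a : ℝ) (g : ℂ) (N : ℕ) {s : ℝ} (hs : 0 < s) :
    (conj (exp (I * ↑(s * a))) * (farFieldFactor κ s * (g / (s : ℂ) ^ N))).re =
      s ^ (-(N : ℝ) - 1 / 2) * (√(2 / (π * κ)) * (exp (I * ↑((κ - a) * s + -(π / 4))) * g).re) := by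
  have hphase : conj (exp (I * ↑(s * a))) * exp (I * ↑(κ * s - π / 4)) =
      exp (I * ↑((κ - a) * s + -(π / 4))) := by
    rw [← exp_conj, ← exp_add, map_mul, conj_I, conj_ofReal]
    congr 1
    push_cast
    ring
  rw [farFieldFactor_mul_div_pow κ g N hs, mul_left_comm, re_ofReal_mul, ← mul_assoc, hphase,
    mul_assoc]

lemma eq_zero_of_re_conj_exp_mul_leading_isBigO {κ a : ℝ} (hκ : 0 < κ) (ha : a < κ) {g : ℂ}
    {N : ℕ} (h : (fun s : ℝ =>
      (conj (exp (I * ↑(s * a))) * (farFieldFactor κ s * (g / (s : ℂ) ^ N))).re) =O[atTop]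
        fun s => s ^ (-(N : ℝ) - 1)) :
    g = 0 := by
  have hG : (fun s : ℝ => √(2 / (π * κ)) * (exp (I * ↑((κ - a) * s + -(π / 4))) * g).re)
      =O[atTop] fun s => s ^ (-(1 / 2 : ℝ)) := by
    refine ((isBigO_refl (fun s : ℝ => s ^ ((N : ℝ) + 1 / 2)) atTop).mul h).congr' ?_ ?_
    · filter_upwards [eventually_gt_atTop 0] with s hs
      rw [re_conj_exp_mul_farFieldFactor_mul κ a g N hs, ← mul_assoc, ← Real.rpow_add hs,
        show (N : ℝ) + 1 / 2 + (-(N : ℝ) - 1 / 2) = 0 by ring, Real.rpow_zero, one_mul]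
    · filter_upwards [eventually_gt_atTop 0] with s hs
      rw [← Real.rpow_add hs]
      congr 1
      ring
  rw [isBigO_const_mul_left_iff (by positivity)] at hG
  exact eq_zero_of_tendsto_re_exp_mul (sub_pos.2 ha) _
    (hG.trans_tendsto (tendsto_rpow_neg_atTop (by norm_num)))

lemma isBigO_rpow_neg_half_of_expansion {κ : ℝ} {ψ : ℝ → ℂ} {f : ℕ → ℂ}
    (hψ : (fun s => ψ s - partialFar κ f 0 s) =O[atTop] fun s => s ^ (-((0 : ℕ) : ℝ) - 3 / 2)) :
    ψ =O[atTop] fun s => s ^ (-(1 / 2 : ℝ)) := by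
  have := isBigO_of_sub_farFieldFactor_mul_isBigO (κ := κ) (c := f 0) (N := 0) (φ := ψ) <|
    hψ.congr_left fun s => by simp [partialFar_eq]
  simpa using this

lemma coeff_eq_of_sq_norm_exp_add_eq {κ a : ℝ} (hκ : 0 < κ) (ha : a < κ)
    {ψ ψ' : ℝ → ℂ} {f f' : ℕ → ℂ}
    (hψ : ∀ N : ℕ, (fun s => ψ s - partialFar κ f N s) =O[atTop]
      fun s => s ^ (-(N : ℝ) - 3 / 2))
    (hψ' : ∀ N : ℕ, (fun s => ψ' s - partialFar κ f' N s) =O[atTop]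
      fun s => s ^ (-(N : ℝ) - 3 / 2))
    (hI : ∀ᶠ s in atTop, ‖exp (I * ↑(s * a)) + ψ s‖ ^ 2 = ‖exp (I * ↑(s * a)) + ψ' s‖ ^ 2)
    {N : ℕ} (hlt : ∀ i < N, f i = f' i) :
    f N = f' N := by
  have hrem : (fun s => (ψ s - ψ' s) - farFieldFactor κ s * ((f N - f' N) / (s : ℂ) ^ N))
      =O[atTop] fun s => s ^ (-(N : ℝ) - 3 / 2) :=
    ((hψ N).sub (hψ' N)).congr_left fun s => by rw [← partialFar_sub_partialFar hlt]; ring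
  have hcross := re_conj_mul_sub_isBigO_of_sq_norm_add_eq
    (isBigO_rpow_neg_half_of_expansion (hψ 0)) (isBigO_rpow_neg_half_of_expansion (hψ' 0))
    (isBigO_of_sub_farFieldFactor_mul_isBigO hrem) hI
  have hremRe : (fun s => (conj (exp (I * ↑(s * a))) *
      ((ψ s - ψ' s) - farFieldFactor κ s * ((f N - f' N) / (s : ℂ) ^ N))).re) =O[atTop]
        fun s => s ^ (-(N : ℝ) - 3 / 2) :=
    (isBigO_of_le _ fun s => (abs_re_le_norm _).trans_eq <| by
      rw [norm_mul, Complex.norm_conj, mul_comm I, norm_exp_ofReal_mul_I, one_mul]).trans hrem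
  refine sub_eq_zero.1 (eq_zero_of_re_conj_exp_mul_leading_isBigO (N := N) hκ ha ?_)
  refine ((hcross.trans (rpow_mul_rpow_isBigO_rpow (by linarith))).sub
    (hremRe.trans (rpow_isBigO_rpow_of_le (by linarith)))).congr_left fun s => ?_
  simp only [mul_sub, sub_re, sub_sub_cancel]

/-- Determination of all far-field expansion coefficients from the intensity of the total
field on a single ray whose direction `θ` differs from the propagation direction `k/κ` of the
plane wave. -/
theorem farfield_coefficients_determined_by_intensity
    (κ : ℝ) (hκ : 0 < κ) (k θ : E2) (hk : ‖k‖ = κ) (hθ : ‖θ‖ = 1) (hθk : θ ≠ κ⁻¹ • k)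
    (ψ₁ ψ₁' : ℝ → ℂ) (f f' : ℕ → ℂ)
    (hψ : ∀ N : ℕ, (fun s : ℝ => ψ₁ s - partialFar κ f N s) =O[atTop]
      fun s : ℝ => s ^ (-(N : ℝ) - 3 / 2))
    (hψ' : ∀ N : ℕ, (fun s : ℝ => ψ₁' s - partialFar κ f' N s) =O[atTop]
      fun s : ℝ => s ^ (-(N : ℝ) - 3 / 2))
    (hI : ∀ s : ℝ, 0 < s →
      ‖Complex.exp (Complex.I * ((s * ⟪k, θ⟫ : ℝ) : ℂ)) + ψ₁ s‖ ^ 2 =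
        ‖Complex.exp (Complex.I * ((s * ⟪k, θ⟫ : ℝ) : ℂ)) + ψ₁' s‖ ^ 2) :
    ∀ j : ℕ, f j = f' j := by
  have ha : ⟪k, θ⟫ < κ := inner_lt_of_ne_inv_smul hκ hk hθ hθk
  intro j
  induction j using Nat.strong_induction_on with
  | _ N ih =>
    exact coeff_eq_of_sq_norm_exp_add_eq hκ ha hψ hψ'
      ((eventually_gt_atTop 0).mono hI) ih
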